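/- Let X = {x^1,...,x^n} and Y = {y^1,...,y^n} be variable families and φ a Boolean formula over X ∪ Y. Consider the implicit CGS with states q_1, q_⊤, q_⊥, self-loops (under all moves) on q_⊤ and q_⊥, agents A^1,...,A^n and B^1,...,B^n each having moves {0, 1} in q_1 and a single move elsewhere, and transition list at q_1 given by δ(q_1) = ((φ[x^j ← (A^j = 1), y^j ← (B^j = 1)], q_⊤), (⊤, q_⊥)). Then q_1 ⊨ ¬⟨A^1,...,A^n⟩X ¬q_⊤ if and only if ∀X. ∃Y. φ is true. -/

import Mathlib

/-!  Core formalization of concurrent game structures (CGS), alternating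
transition systems (ATS), and the logic ATL, following Alur-Henzinger-Kupferman
and Laroussinie-Markey-Oreiby, "On the Expressiveness and Complexity of ATL".

A generic "game structure" `GS Agt Loc P M` has locations labelled by atomic
propositions from `P`, and in each location each agent has a set of available
moves (of type `M`); a joint move (one move per agent) leads to a set of
possible successor locations (a singleton for CGSs, the intersection of the
chosen sets for ATSs). -/

structure GS (Agt Loc P M : Type) where
  lab : Loc → Set P
  mov : Loc → Agt → Set M
  step : Loc → (Agt → M) → Set Loc

namespace GS

variable {Agt Loc P M : Type}

/-- a complete joint move, valid at `ℓ`. -/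
def ValidMove (S : GS Agt Loc P M) (ℓ : Loc) (m : Agt → M) : Prop :=
  ∀ a, m a ∈ S.mov ℓ a

/-- `Next ℓ A mA`: locations reachable from `ℓ` when each member `a` of the
coalition `A` plays `mA a` (and the other agents play arbitrary valid moves). -/
def Next (S : GS Agt Loc P M) (ℓ : Loc) (A : Set Agt) (mA : Agt → M) : Set Loc :=
  {ℓ' | ∃ m, S.ValidMove ℓ m ∧ (∀ a ∈ A, m a = mA a) ∧ ℓ' ∈ S.step ℓ m}

/-- all possible successors of `ℓ`. -/
def NextAll (S : GS Agt Loc P M) (ℓ : Loc) : Set Loc :=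
  {ℓ' | ∃ m, S.ValidMove ℓ m ∧ ℓ' ∈ S.step ℓ m}

/-- the controllable predecessors: `ℓ ∈ CPre A T` iff coalition `A` has a move
forcing the next location to be in `T`. -/
def CPre (S : GS Agt Loc P M) (A : Set Agt) (T : Set Loc) : Set Loc :=
  {ℓ | ∃ mA : Agt → M, (∀ a ∈ A, mA a ∈ S.mov ℓ a) ∧ S.Next ℓ A mA ⊆ T}

theorem cpre_mono (S : GS Agt Loc P M) (A : Set Agt) : Monotone (S.CPre A) := by
  intro T T' h ℓ hℓ
  obtain ⟨mA, hv, hn⟩ := hℓ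
  exact ⟨mA, hv, hn.trans h⟩

/-- A strategy maps the (strict) past history and current location to a move
for each agent (only the moves of the coalition members are relevant). -/
def Strat (Agt Loc M : Type) : Type := List Loc → Loc → Agt → M

def StratValid (S : GS Agt Loc P M) (A : Set Agt) (F : Strat Agt Loc M) : Prop :=
  ∀ h ℓ a, a ∈ A → F h ℓ a ∈ S.mov ℓ a

/-- a strategy is memoryless (state-based) if it only depends on the current
location. -/
def Memoryless (F : Strat Agt Loc M) : Prop :=
  ∀ h h' ℓ a, F h ℓ a = F h' ℓ a

/-- the history `ρ 0, …, ρ (i-1)`. -/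
def hist (ρ : ℕ → Loc) (i : ℕ) : List Loc := List.ofFn (fun j : Fin i => ρ j)

/-- computations from `ℓ`. -/
def Comp (S : GS Agt Loc P M) (ℓ : Loc) (ρ : ℕ → Loc) : Prop :=
  ρ 0 = ℓ ∧ ∀ i, ρ (i + 1) ∈ S.NextAll (ρ i)

/-- the outcomes of a strategy `F` of coalition `A` from `ℓ`. -/
def Out (S : GS Agt Loc P M) (A : Set Agt) (ℓ : Loc) (F : Strat Agt Loc M)
    (ρ : ℕ → Loc) : Prop :=
  ρ 0 = ℓ ∧ ∀ i, ρ (i + 1) ∈ S.Next (ρ i) A (F (hist ρ i) (ρ i))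

end GS

/-! ### ATL syntax and semantics -/

mutual
  /-- ATL state formulas. -/
  inductive SForm (Agt P : Type) : Type where
    | tru : SForm Agt P
    | atom : P → SForm Agt P
    | snot : SForm Agt P → SForm Agt P
    | sor : SForm Agt P → SForm Agt P → SForm Agt P
    | coal : Set Agt → PForm Agt P → SForm Agt P
  /-- ATL path formulas. -/
  inductive PForm (Agt P : Type) : Type where
    | pnot : PForm Agt P → PForm Agt P
    | nxt : SForm Agt P → PForm Agt P
    | untl : SForm Agt P → SForm Agt P → PForm Agt P
end

mutual
  /-- satisfaction of an ATL state formula at a location. -/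
  def SSat {Agt Loc P M : Type} (S : GS Agt Loc P M) : SForm Agt P → Loc → Prop
    | .tru, _ => True
    | .atom p, ℓ => p ∈ S.lab ℓ
    | .snot φ, ℓ => ¬ SSat S φ ℓ
    | .sor φ ψ, ℓ => SSat S φ ℓ ∨ SSat S ψ ℓ
    | .coal A φ, ℓ =>
        ∃ F : GS.Strat Agt Loc M, S.StratValid A F ∧
          ∀ ρ : ℕ → Loc, S.Out A ℓ F ρ → PSat S φ ρ
  /-- satisfaction of an ATL path formula along a sequence of locations. -/
  def PSat {Agt Loc P M : Type} (S : GS Agt Loc P M) : PForm Agt P → (ℕ → Loc) → Prop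
    | .pnot φ, ρ => ¬ PSat S φ ρ
    | .nxt φ, ρ => SSat S φ (ρ 1)
    | .untl φ ψ, ρ => ∃ i, SSat S ψ (ρ i) ∧ ∀ j < i, SSat S φ (ρ j)
end

/-- the release modality:  `φ R ψ := ¬((¬φ) U (¬ψ))`. -/
def PForm.rel {Agt P : Type} (φ ψ : SForm Agt P) : PForm Agt P :=
  .pnot (.untl φ.snot ψ.snot)

/-- the weak-until modality:  `φ W ψ := ψ R (φ ∨ ψ)`. -/
def PForm.wuntl {Agt P : Type} (φ ψ : SForm Agt P) : PForm Agt P :=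
  PForm.rel ψ (φ.sor ψ)

/-- conjunction of state formulas. -/
def SForm.sand {Agt P : Type} (φ ψ : SForm Agt P) : SForm Agt P :=
  .snot (.sor φ.snot ψ.snot)

/-- the set of locations satisfying a state formula. -/
def SatSet {Agt Loc P M : Type} (S : GS Agt Loc P M) (φ : SForm Agt P) : Set Loc :=
  {ℓ | SSat S φ ℓ}

/-! ### Concurrent game structures (explicit) and alternating transition systems -/

/-- an (explicit) concurrent game structure: moves are natural numbers, and the
transition table gives the successor of each joint move. -/
structure CGS (Agt Loc P : Type) where
  lab : Loc → Set P
  chc : Loc → Agt → Finset ℕ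
  edg : Loc → (Agt → ℕ) → Loc

namespace CGS

variable {Agt Loc P : Type}

def WellFormed (G : CGS Agt Loc P) : Prop := ∀ ℓ a, (G.chc ℓ a).Nonempty

def toGS (G : CGS Agt Loc P) : GS Agt Loc P ℕ where
  lab := G.lab
  mov ℓ a := ↑(G.chc ℓ a)
  step ℓ m := {G.edg ℓ m}

/-- a CGS is turn-based if in every location at most one agent has more than
one available move. -/
def TurnBased (G : CGS Agt Loc P) : Prop :=
  ∀ ℓ (a b : Agt), 1 < (G.chc ℓ a).card → 1 < (G.chc ℓ b).card → a = b

end CGS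

/-- an alternating transition system: a move of an agent is a set of locations;
a joint move leads to the intersection of the chosen sets (a singleton when the
ATS is well-formed). -/
structure ATS (Agt Loc P : Type) where
  lab : Loc → Set P
  chc : Loc → Agt → Set (Set Loc)

namespace ATS

variable {Agt Loc P : Type}

/-- well-formedness: each agent always has some available move, and each joint
choice of moves intersects in a singleton. -/
def WellFormed (T : ATS Agt Loc P) : Prop :=
  (∀ ℓ a, (T.chc ℓ a).Nonempty) ∧
  ∀ ℓ (Q : Agt → Set Loc), (∀ a, Q a ∈ T.chc ℓ a) → ∃ ℓ', (⋂ a, Q a) = {ℓ'}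

def toGS (T : ATS Agt Loc P) : GS Agt Loc P (Set Loc) where
  lab := T.lab
  mov := T.chc
  step _ Q := ⋂ a, Q a

end ATS

/-! ### Implicit concurrent game structures -/

/-- boolean formulas over atoms `A_j = c` ("agent `A_j` plays move `c`"). -/
inductive MoveForm (Agt : Type) : Type where
  | tt : MoveForm Agt
  | ff : MoveForm Agt
  | isEq : Agt → ℕ → MoveForm Agt
  | neg : MoveForm Agt → MoveForm Agt
  | conj : MoveForm Agt → MoveForm Agt → MoveForm Agt
  | disj : MoveForm Agt → MoveForm Agt → MoveForm Agt

/-- evaluation of a move formula under a joint move. -/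
def MoveForm.eval {Agt : Type} (m : Agt → ℕ) : MoveForm Agt → Bool
  | .tt => true
  | .ff => false
  | .isEq a c => m a == c
  | .neg φ => ! φ.eval m
  | .conj φ ψ => φ.eval m && ψ.eval m
  | .disj φ ψ => φ.eval m || ψ.eval m

/-- an implicit CGS: in each location, the transition function is given by a
finite list of guarded targets `(φ, ℓ')`; the successor under a joint move is
the target of the first guard that evaluates to true. -/
structure ICGS (Agt Loc P : Type) where
  lab : Loc → Set P
  chc : Loc → Agt → Finset ℕ
  trans : Loc → List (MoveForm Agt × Loc)

namespace ICGS

variable {Agt Loc P : Type}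

/-- the transition function determined by the guarded lists. -/
def edg (G : ICGS Agt Loc P) (ℓ : Loc) (m : Agt → ℕ) : Loc :=
  match (G.trans ℓ).find? (fun e => e.1.eval m) with
  | some e => e.2
  | none => ℓ

def toCGS (G : ICGS Agt Loc P) : CGS Agt Loc P :=
  ⟨G.lab, G.chc, G.edg⟩

def toGS (G : ICGS Agt Loc P) : GS Agt Loc P ℕ := G.toCGS.toGS

/-- well-formedness: every agent always has an available move, and in each
location the last guard of the transition list is `⊤` (hence no joint move can
produce a deadlock). -/
def WellFormed (G : ICGS Agt Loc P) : Prop :=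
  (∀ ℓ a, (G.chc ℓ a).Nonempty) ∧
  ∀ ℓ, ∃ ℓ' : Loc, (G.trans ℓ).getLast? = some (MoveForm.tt, ℓ')

end ICGS

/-! ### Boolean formulas (for QBF-style instances) -/

/-- boolean formulas over a set `V` of variables. -/
inductive BForm (V : Type) : Type where
  | var : V → BForm V
  | bnot : BForm V → BForm V
  | band : BForm V → BForm V → BForm V
  | bor : BForm V → BForm V → BForm V

/-- evaluation of a boolean formula under a valuation. -/
def BForm.eval {V : Type} (g : V → Bool) : BForm V → Bool
  | .var v => g v
  | .bnot φ => ! φ.eval g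
  | .band φ ψ => φ.eval g && ψ.eval g
  | .bor φ ψ => φ.eval g || ψ.eval g

/-- substituting a move formula for each variable. -/
def BForm.subst {V Agt : Type} (σ : V → MoveForm Agt) : BForm V → MoveForm Agt
  | .var v => σ v
  | .bnot φ => .neg (φ.subst σ)
  | .band φ ψ => .conj (φ.subst σ) (ψ.subst σ)
  | .bor φ ψ => .disj (φ.subst σ) (ψ.subst σ)

/-! ### Statement 14

The same implicit CGS as in the `Σ₂`-hardness reduction; the atomic
proposition (here `()`, read `q_⊤`) holds exactly at the state `q_⊤`.
Then `q₁ ⊨ ¬⟨A¹,…,Aⁿ⟩X ¬q_⊤` iff `∀X. ∃Y. φ`. -/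

/-- the implicit CGS of the reduction (locations `0 = q₁`, `1 = q_⊤`,
`2 = q_⊥`; the unique atomic proposition holds exactly at `q_⊤`). -/
def aqsatICGS {n : ℕ} (φ : BForm (Fin n ⊕ Fin n)) :
    ICGS (Fin n ⊕ Fin n) (Fin 3) Unit where
  lab ℓ := {_u : Unit | ℓ = 1}
  chc ℓ _ := if ℓ = 0 then {0, 1} else {0}
  trans ℓ :=
    if ℓ = 0 then [(φ.subst (fun v => .isEq v 1), 1), (.tt, 2)]
    else [(.tt, ℓ)]


/-! When no location blocks, every first move of a strategy extends to a full outcome, so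
`⟨A⟩X ψ` holds exactly at the controllable predecessors of the states satisfying `ψ`. At `q₁`
the moves of the agents `Aʲ` and `Bʲ` encode valuations of `X` and `Y`, and the game moves to
`q_⊤` exactly when `φ` holds under them; so the coalition `A` can avoid `q_⊤` iff some valuation
of `X` falsifies `φ` for every valuation of `Y`. -/

namespace GS

variable {Agt Loc P M : Type} (S : GS Agt Loc P M)

/-- The play from `ℓ` generated by a history-dependent successor function, recorded as pairs
(strict history, current location). -/
def unfold (next : List Loc → Loc → Loc) (ℓ : Loc) : ℕ → List Loc × Loc
  | 0 => ([], ℓ)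
  | i + 1 =>
    ((unfold next ℓ i).1 ++ [(unfold next ℓ i).2], next (unfold next ℓ i).1 (unfold next ℓ i).2)

theorem unfold_fst_eq_hist (next : List Loc → Loc → Loc) (ℓ : Loc) (i : ℕ) :
    (unfold next ℓ i).1 = hist (fun j => (unfold next ℓ j).2) i := by
  induction i with
  | zero => simp [unfold, hist]
  | succ i ih => rw [hist, List.ofFn_succ_last, unfold, ih]; rfl

theorem out_unfold {A : Set Agt} {F : Strat Agt Loc M} {next : List Loc → Loc → Loc}
    (hnext : ∀ h c, next h c ∈ S.Next c A (F h c)) (ℓ : Loc) :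
    S.Out A ℓ F (fun j => (unfold next ℓ j).2) := by
  refine ⟨rfl, fun i => ?_⟩
  rw [← unfold_fst_eq_hist]
  exact hnext _ _

theorem next_nonempty (hmov : ∀ ℓ a, (S.mov ℓ a).Nonempty)
    (hstep : ∀ ℓ m, S.ValidMove ℓ m → (S.step ℓ m).Nonempty) {A : Set Agt} {ℓ : Loc}
    {mA : Agt → M} (hmA : ∀ a ∈ A, mA a ∈ S.mov ℓ a) : (S.Next ℓ A mA).Nonempty := by
  classical
  let m a := if a ∈ A then mA a else (hmov ℓ a).some
  have hm : S.ValidMove ℓ m := fun a => by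
    by_cases ha : a ∈ A
    · simpa [m, ha] using hmA a ha
    · simpa [m, ha] using (hmov ℓ a).some_mem
  obtain ⟨ℓ', hℓ'⟩ := hstep ℓ m hm
  exact ⟨ℓ', m, hm, fun a ha => if_pos ha, hℓ'⟩

theorem exists_out_of_mem_next (hmov : ∀ ℓ a, (S.mov ℓ a).Nonempty)
    (hstep : ∀ ℓ m, S.ValidMove ℓ m → (S.step ℓ m).Nonempty) {A : Set Agt}
    {F : Strat Agt Loc M} (hF : S.StratValid A F) {ℓ ℓ₁ : Loc}
    (h₁ : ℓ₁ ∈ S.Next ℓ A (F [] ℓ)) : ∃ ρ, S.Out A ℓ F ρ ∧ ρ 1 = ℓ₁ := by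
  classical
  have hne h c : (S.Next c A (F h c)).Nonempty := S.next_nonempty hmov hstep (hF h c)
  let next h c := if h = [] ∧ c = ℓ then ℓ₁ else (hne h c).some
  have hnext h c : next h c ∈ S.Next c A (F h c) := by
    by_cases hc : h = [] ∧ c = ℓ
    · obtain ⟨rfl, rfl⟩ := hc
      simpa [next] using h₁
    · simpa [next, hc] using (hne h c).some_mem
  exact ⟨_, S.out_unfold hnext ℓ, by simp [unfold, next]⟩

theorem sSat_coal_nxt_iff (hmov : ∀ ℓ a, (S.mov ℓ a).Nonempty)
    (hstep : ∀ ℓ m, S.ValidMove ℓ m → (S.step ℓ m).Nonempty) (A : Set Agt)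
    (ψ : SForm Agt P) (ℓ : Loc) :
    SSat S (.coal A (.nxt ψ)) ℓ ↔ ℓ ∈ S.CPre A (SatSet S ψ) := by
  classical
  simp only [SSat, PSat]
  constructor
  · rintro ⟨F, hF, hout⟩
    refine ⟨F [] ℓ, hF [] ℓ, fun ℓ₁ h₁ => ?_⟩
    obtain ⟨ρ, hρ, rfl⟩ := S.exists_out_of_mem_next hmov hstep hF h₁
    exact hout ρ hρ
  · rintro ⟨mA, hmA, hsub⟩
    let F : Strat Agt Loc M := fun _ c a => if c = ℓ ∧ a ∈ A then mA a else (hmov c a).some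
    refine ⟨F, fun h c a ha => ?_, fun ρ ⟨h₀, hρ⟩ => hsub ?_⟩
    · by_cases hc : c = ℓ
      · subst hc; simpa [F, ha] using hmA a ha
      · simpa [F, hc] using (hmov c a).some_mem
    · obtain ⟨m, hm, hagree, hstep⟩ := hρ 0
      rw [h₀] at hm hagree hstep
      exact ⟨m, hm, fun a ha => by simp [hagree a ha, F, ha], hstep⟩

end GS

namespace CGS

variable {Agt Loc P : Type} (G : CGS Agt Loc P)

theorem mem_cPre_toGS_iff {A : Set Agt} {T : Set Loc} {ℓ : Loc} :
    ℓ ∈ G.toGS.CPre A T ↔ ∃ mA : Agt → ℕ, (∀ a ∈ A, mA a ∈ G.chc ℓ a) ∧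
      ∀ m : Agt → ℕ, (∀ a, m a ∈ G.chc ℓ a) → (∀ a ∈ A, m a = mA a) → G.edg ℓ m ∈ T := by
  constructor
  · rintro ⟨mA, hmA, hsub⟩
    exact ⟨mA, hmA, fun m hm hagree => hsub ⟨m, hm, hagree, rfl⟩⟩
  · rintro ⟨mA, hmA, hforce⟩
    refine ⟨mA, hmA, ?_⟩
    rintro _ ⟨m, hm, hagree, rfl⟩
    exact hforce m hm hagree

theorem sSat_coal_nxt_iff (hG : G.WellFormed) (A : Set Agt) (ψ : SForm Agt P) (ℓ : Loc) :
    SSat G.toGS (.coal A (.nxt ψ)) ℓ ↔ ℓ ∈ G.toGS.CPre A (SatSet G.toGS ψ) :=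
  G.toGS.sSat_coal_nxt_iff (fun ℓ a => Finset.coe_nonempty.mpr (hG ℓ a))
    (fun _ _ _ => Set.singleton_nonempty _) A ψ ℓ

end CGS

theorem BForm.eval_subst {V Agt : Type} (σ : V → MoveForm Agt) (m : Agt → ℕ) (φ : BForm V) :
    (φ.subst σ).eval m = φ.eval (fun v => (σ v).eval m) := by
  induction φ <;> simp [BForm.subst, BForm.eval, MoveForm.eval, *]

section aqsat

variable {n : ℕ} (φ : BForm (Fin n ⊕ Fin n))

theorem aqsatICGS_wellFormed : (aqsatICGS φ).toCGS.WellFormed := by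
  intro ℓ _
  by_cases hℓ : ℓ = 0 <;> simp [ICGS.toCGS, aqsatICGS, hℓ]

theorem aqsatICGS_edg_zero (m : Fin n ⊕ Fin n → ℕ) :
    (aqsatICGS φ).edg 0 m = if φ.eval (fun v => m v == 1) then 1 else 2 := by
  cases h : φ.eval (fun v => m v == 1) <;>
    simp [ICGS.edg, aqsatICGS, BForm.eval_subst, MoveForm.eval, h]

theorem aqsatICGS_zero_mem_cPre_iff :
    (0 : Fin 3) ∈ (aqsatICGS φ).toGS.CPre (Set.range Sum.inl) {ℓ | ℓ ≠ 1} ↔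
      ∃ gX : Fin n → Bool, ∀ gY : Fin n → Bool, φ.eval (Sum.elim gX gY) = false := by
  have hchc a : (aqsatICGS φ).chc 0 a = {0, 1} := rfl
  rw [ICGS.toGS, CGS.mem_cPre_toGS_iff]
  simp only [ICGS.toCGS, hchc, aqsatICGS_edg_zero, Set.mem_ofPred_eq]
  constructor
  · rintro ⟨mA, hmA, hforce⟩
    refine ⟨fun i => mA (.inl i) == 1, fun gY => ?_⟩
    let m := Sum.elim (mA ∘ Sum.inl) (fun j => (gY j).toNat)
    have hm : ∀ a, m a ∈ ({0, 1} : Finset ℕ) := by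
      rintro (i | j)
      · exact hmA _ ⟨i, rfl⟩
      · cases gY j <;> simp [m]
    have hval : (fun v => m v == 1) = Sum.elim (fun i => mA (.inl i) == 1) gY := by
      funext v; cases v <;> simp [m]
    simpa [hval] using hforce m hm (by rintro _ ⟨i, rfl⟩; rfl)
  · rintro ⟨gX, hgX⟩
    refine ⟨Sum.elim (fun i => (gX i).toNat) (fun _ => 0), ?_, fun m _ hm => ?_⟩
    · rintro _ ⟨i, rfl⟩
      cases gX i <;> simp
    · have hval : (fun v => m v == 1) = Sum.elim gX (fun j => m (.inr j) == 1) := by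
        funext v
        rcases v with i | j
        · simp [hm (.inl i) ⟨i, rfl⟩]
        · rfl
      simp [hval, hgX]

end aqsat

theorem aqsat_negATL_iff (n : ℕ) (φ : BForm (Fin n ⊕ Fin n)) :
    SSat (aqsatICGS φ).toGS
        (.snot (.coal (Set.range (Sum.inl : Fin n → Fin n ⊕ Fin n))
          (.nxt (.snot (.atom ()))))) (0 : Fin 3) ↔
      ∀ gX : Fin n → Bool, ∃ gY : Fin n → Bool,
        φ.eval (Sum.elim gX gY) = true := by
  have hsat : SatSet (aqsatICGS φ).toGS (.snot (.atom ())) = {ℓ | ℓ ≠ 1} := by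
    ext ℓ
    simp [SatSet, SSat, ICGS.toGS, ICGS.toCGS, CGS.toGS, aqsatICGS]
  rw [SSat, ICGS.toGS, CGS.sSat_coal_nxt_iff _ (aqsatICGS_wellFormed φ), ← ICGS.toGS, hsat,
    aqsatICGS_zero_mem_cPre_iff]
  simp only [not_exists, not_forall, Bool.not_eq_false]
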